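/- The comaximal graph of the Heisenberg Lie algebra H₃(F_q) with its unique isolated vertex removed is a (q²+q)-regular graph on (q+1)² vertices. -/

import Mathlib

/-!
Every bracket lies in the centre `Z = K ∙ h`, so every line and every subspace containing `h` is
a subalgebra. Conversely a subalgebra `S` with `S + Z = H` is all of `H`: writing `e = a + c • h`
and `f = b + d • h` with `a, b ∈ S` gives `⁅a, b⁆ = ⁅e, f⁆ = h ∈ S`. Hence the proper nonzero
subalgebras are the lines and the planes through `h`, and `A ⊔ B = H` iff `A + B + Z = H`. In
particular `Z` is isolated, and for a vertex `A ≠ Z` the plane `P = A + Z` is a hyperplane, so the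
neighbours of `A` are the vertices not contained in `P`. Counting points of projective spaces over
`F_q` gives `(q² + q) + (q + 1) = (q + 1)²` vertices other than `Z`, of which `q + 1` (the `q`
lines of `P` other than `Z`, and `P` itself) lie in `P`.
-/

open Module

namespace Submodule

variable {K V : Type*} [DivisionRing K] [AddCommGroup V] [Module K V]

theorem finrank_comap_mkQ [FiniteDimensional K V] (p : Submodule K V)
    (W : Submodule K (V ⧸ p)) :
    finrank K (W.comap p.mkQ) = finrank K W + finrank K p := by
  have hrange : LinearMap.range (p.mkQ.domRestrict (W.comap p.mkQ)) = W := by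
    rw [LinearMap.range_domRestrict, map_comap_eq_of_surjective p.mkQ_surjective]
  have hker : LinearMap.ker (p.mkQ.domRestrict (W.comap p.mkQ)) =
      p.comap (W.comap p.mkQ).subtype := by
    rw [LinearMap.ker_domRestrict, ker_mkQ]
  have hle : p ≤ W.comap p.mkQ := (ker_mkQ p).ge.trans (LinearMap.ker_le_comap _)
  rw [← (p.mkQ.domRestrict (W.comap p.mkQ)).finrank_range_add_finrank_ker, hrange, hker,
    (comapSubtypeEquivOfLe hle).finrank_eq]

theorem ncard_setOf_finrank_eq_one [Finite K] {n : ℕ} (h : finrank K V = n) :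
    {p : Submodule K V | finrank K p = 1}.ncard = ∑ i ∈ Finset.range n, Nat.card K ^ i := by
  rw [← Nat.card_coe_set_eq]
  exact (Nat.card_congr (Projectivization.equivSubmodule K V)).symm.trans
    (Projectivization.card_of_finrank K V h)

theorem ncard_setOf_finrank_eq_one_le (U : Submodule K V) :
    {p : Submodule K V | finrank K p = 1 ∧ p ≤ U}.ncard =
      {p : Submodule K U | finrank K p = 1}.ncard := by
  rw [← Set.ncard_image_of_injective _ (map_injective_of_injective U.injective_subtype)]
  congr 1
  ext p
  constructor
  · rintro ⟨hp, hpU⟩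
    refine ⟨p.comap U.subtype, ?_, ?_⟩
    · rw [Set.mem_ofPred_eq, ← finrank_map_subtype_eq, map_comap_subtype, inf_eq_right.2 hpU, hp]
    · rw [map_comap_subtype, inf_eq_right.2 hpU]
  · rintro ⟨q, hq, rfl⟩
    exact ⟨(finrank_map_subtype_eq U q).trans hq, map_subtype_le U q⟩

theorem ncard_setOf_le_finrank_eq_succ [FiniteDimensional K V] (p : Submodule K V) :
    {q : Submodule K V | p ≤ q ∧ finrank K q = finrank K p + 1}.ncard =
      {W : Submodule K (V ⧸ p) | finrank K W = 1}.ncard := by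
  rw [← Set.ncard_image_of_injective _ (comap_injective_of_surjective p.mkQ_surjective)]
  congr 1
  ext q
  constructor
  · rintro ⟨hpq, hq⟩
    refine ⟨q.map p.mkQ, ?_, by rw [comap_map_mkQ, sup_eq_right.2 hpq]⟩
    have := finrank_comap_mkQ p (q.map p.mkQ)
    rw [comap_map_mkQ, sup_eq_right.2 hpq] at this
    rw [Set.mem_ofPred_eq]
    omega
  · rintro ⟨W, hW, rfl⟩
    refine ⟨?_, by rw [finrank_comap_mkQ, hW, add_comm]⟩
    exact (ker_mkQ p).ge.trans (LinearMap.ker_le_comap _)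

theorem sup_eq_top_iff_not_le [FiniteDimensional K V] {P : Submodule K V}
    (hP : finrank K P + 1 = finrank K V) (B : Submodule K V) : P ⊔ B = ⊤ ↔ ¬ B ≤ P := by
  constructor
  · intro hPB hBP
    rw [sup_eq_left.2 hBP] at hPB
    rw [hPB, finrank_top] at hP
    omega
  · intro hBP
    have := finrank_lt_finrank_of_lt (left_lt_sup.2 hBP)
    exact eq_top_of_finrank_eq (le_antisymm (finrank_le _) (by omega))

end Submodule

section HeisenbergVertexSpaces

variable {K V : Type*} [DivisionRing K] [AddCommGroup V] [Module K V] {h : V}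

variable (K) in
/-- The subspaces underlying the proper nonzero subalgebras of `H₃` other than its
centre `K ∙ h`. -/
def heisenbergVertexSpaces (h : V) : Set (Submodule K V) :=
  {p | finrank K p = 1 ∧ p ≠ K ∙ h} ∪ {p | h ∈ p ∧ finrank K p = 2}

theorem finrank_sup_span_singleton_of_mem_heisenbergVertexSpaces (hh : h ≠ 0)
    {p : Submodule K V} (hp : p ∈ heisenbergVertexSpaces K h) :
    finrank K (p ⊔ K ∙ h : Submodule K V) = 2 := by
  rcases hp with ⟨hp, hpZ⟩ | ⟨hhp, hp⟩
  · have : FiniteDimensional K p := Module.finite_of_finrank_pos (by omega)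
    have hpZ' : ¬ p ≤ K ∙ h := fun hle ↦ hpZ (Submodule.eq_of_le_of_finrank_eq hle
      (by rw [hp, finrank_span_singleton hh]))
    have hlt := Submodule.finrank_lt_finrank_of_lt (right_lt_sup.2 hpZ')
    have hle := Submodule.finrank_add_le_finrank_add_finrank p (K ∙ h)
    rw [finrank_span_singleton hh] at hlt hle
    omega
  · rwa [sup_eq_left.2 ((Submodule.span_singleton_le_iff_mem _ _).2 hhp)]

theorem ncard_heisenbergVertexSpaces [Finite K] (hV : finrank K V = 3) (hh : h ≠ 0) :
    (heisenbergVertexSpaces K h).ncard = (Nat.card K + 1) ^ 2 := by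
  have : FiniteDimensional K V := Module.finite_of_finrank_pos (by omega)
  have : Finite V := Module.finite_of_finite K
  have hZ : finrank K (K ∙ h) = 1 := finrank_span_singleton hh
  have hlines : {p : Submodule K V | finrank K p = 1 ∧ p ≠ K ∙ h}.ncard =
      Nat.card K ^ 2 + Nat.card K := by
    change ({p : Submodule K V | finrank K p = 1} \ {K ∙ h}).ncard = _
    rw [Set.ncard_sdiff_singleton_of_mem (s := {p : Submodule K V | finrank K p = 1}) hZ,
      Submodule.ncard_setOf_finrank_eq_one hV]
    simp [Finset.sum_range_succ]
    omega
  have hplanes : {p : Submodule K V | h ∈ p ∧ finrank K p = 2}.ncard = Nat.card K + 1 := by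
    have hquot : finrank K (V ⧸ K ∙ h) = 2 := by
      have := Submodule.finrank_quotient_add_finrank (K ∙ h)
      omega
    have : {p : Submodule K V | h ∈ p ∧ finrank K p = 2} =
        {p | K ∙ h ≤ p ∧ finrank K p = finrank K (K ∙ h) + 1} := by
      simp [Submodule.span_singleton_le_iff_mem, hZ]
    rw [this, Submodule.ncard_setOf_le_finrank_eq_succ,
      Submodule.ncard_setOf_finrank_eq_one hquot]
    simp [Finset.sum_range_succ, add_comm]
  have hdisj : Disjoint {p : Submodule K V | finrank K p = 1 ∧ p ≠ K ∙ h}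
      {p | h ∈ p ∧ finrank K p = 2} :=
    Set.disjoint_left.2 fun p h1 h2 ↦ by
      have := h1.1
      have := h2.2
      omega
  rw [heisenbergVertexSpaces, Set.ncard_union_eq hdisj, hlines, hplanes]
  ring

theorem ncard_heisenbergVertexSpaces_inter_Iic [Finite K] [FiniteDimensional K V] (hh : h ≠ 0)
    {P : Submodule K V} (hhP : h ∈ P) (hP : finrank K P = 2) :
    (heisenbergVertexSpaces K h ∩ Set.Iic P).ncard = Nat.card K + 1 := by
  have : Finite V := Module.finite_of_finite K
  have hsplit : heisenbergVertexSpaces K h ∩ Set.Iic P =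
      {p : Submodule K V | finrank K p = 1 ∧ p ≤ P} \ {K ∙ h} ∪ {P} := by
    ext p
    constructor
    · rintro ⟨⟨h1, hpZ⟩ | ⟨-, h2⟩, hpP⟩
      · exact Or.inl ⟨⟨h1, hpP⟩, hpZ⟩
      · exact Or.inr (Submodule.eq_of_le_of_finrank_eq hpP (h2.trans hP.symm))
    · rintro (⟨⟨h1, hpP⟩, hpZ⟩ | rfl)
      · exact ⟨Or.inl ⟨h1, hpZ⟩, hpP⟩
      · exact ⟨Or.inr ⟨hhP, hP⟩, Set.mem_Iic.2 le_rfl⟩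
  have hdisj : Disjoint ({p : Submodule K V | finrank K p = 1 ∧ p ≤ P} \ {K ∙ h}) {P} :=
    Set.disjoint_singleton_right.2 fun hP' ↦ by
      have := hP'.1.1
      omega
  have hZ : K ∙ h ∈ {p : Submodule K V | finrank K p = 1 ∧ p ≤ P} :=
    ⟨finrank_span_singleton hh, (Submodule.span_singleton_le_iff_mem _ _).2 hhP⟩
  rw [hsplit, Set.ncard_union_eq hdisj, Set.ncard_sdiff_singleton_of_mem hZ,
    Submodule.ncard_setOf_finrank_eq_one_le, Submodule.ncard_setOf_finrank_eq_one hP,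
    Set.ncard_singleton]
  simp

end HeisenbergVertexSpaces

namespace LieSubalgebra

variable {R L : Type*} [CommRing R] [LieRing L] [LieAlgebra R L]

theorem natCard_toSubmodule_mem {s : Set (Submodule R L)}
    (hs : ∀ p ∈ s, ∃ A : LieSubalgebra R L, ↑A = p) :
    Nat.card {A : LieSubalgebra R L // ↑A ∈ s} = s.ncard := by
  rw [← Nat.card_coe_set_eq]
  refine Nat.card_congr (Equiv.ofBijective (fun A ↦ ⟨A.1, A.2⟩) ⟨?_, ?_⟩)
  · exact fun A B hAB ↦ Subtype.ext (toSubmodule_injective (congrArg Subtype.val hAB))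
  · rintro ⟨p, hp⟩
    obtain ⟨A, rfl⟩ := hs p hp
    exact ⟨⟨A, hp⟩, rfl⟩

theorem toSubmodule_lieSpan_singleton (v : L) :
    (lieSpan R L {v} : Submodule R L) = R ∙ v :=
  coe_lieSpan_eq_span_of_forall_lie_eq_zero (by simp)

theorem exists_toSubmodule_eq_of_finrank_eq_one {K : Type*} [Field K] [LieAlgebra K L]
    {p : Submodule K L} (hp : finrank K p = 1) : ∃ A : LieSubalgebra K L, ↑A = p := by
  obtain ⟨v, -, hv⟩ := finrank_eq_one_iff'.1 hp
  refine p.exists_lieSubalgebra_coe_eq_iff.2 fun x y hx hy ↦ ?_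
  obtain ⟨a, ha⟩ := hv ⟨x, hx⟩
  obtain ⟨b, hb⟩ := hv ⟨y, hy⟩
  rw [← show ((a • v : p) : L) = x from congrArg Subtype.val ha,
    ← show ((b • v : p) : L) = y from congrArg Subtype.val hb]
  simp

end LieSubalgebra

structure IsHeisenbergTriple {L : Type*} [LieRing L] (e f h : L) : Prop where
  lie_e_f : ⁅e, f⁆ = h
  lie_e_h : ⁅e, h⁆ = 0
  lie_f_h : ⁅f, h⁆ = 0

namespace IsHeisenbergTriple

section CommRing

variable {R L : Type*} [CommRing R] [LieRing L] [LieAlgebra R L] {e f h : L}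
  (hH : IsHeisenbergTriple e f h)
include hH

theorem lie_mem_span_singleton (hspan : Submodule.span R {e, f, h} = ⊤) (x y : L) :
    ⁅x, y⁆ ∈ R ∙ h := by
  obtain ⟨a, b, c, rfl⟩ := Submodule.mem_span_triple.1 (hspan ▸ Submodule.mem_top : x ∈ _)
  obtain ⟨a', b', c', rfl⟩ := Submodule.mem_span_triple.1 (hspan ▸ Submodule.mem_top : y ∈ _)
  have hfe : ⁅f, e⁆ = -h := by rw [← lie_skew, hH.lie_e_f]
  have hhe : ⁅h, e⁆ = 0 := by rw [← lie_skew, hH.lie_e_h, neg_zero]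
  have hhf : ⁅h, f⁆ = 0 := by rw [← lie_skew, hH.lie_f_h, neg_zero]
  refine Submodule.mem_span_singleton.2 ⟨a * b' - b * a', ?_⟩
  simp only [lie_add, add_lie, lie_smul, smul_lie, hH.lie_e_f, hH.lie_e_h, hH.lie_f_h, hfe, hhe,
    hhf, lie_self, smul_zero, smul_neg]
  module

theorem eq_top_of_sup_span_singleton_eq_top (S : LieSubalgebra R L)
    (hS : (S : Submodule R L) ⊔ R ∙ h = ⊤) : S = ⊤ := by
  obtain ⟨a, ha, _, hc, hae⟩ := Submodule.mem_sup.1 (hS ▸ Submodule.mem_top : e ∈ _)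
  obtain ⟨b, hb, _, hd, hbf⟩ := Submodule.mem_sup.1 (hS ▸ Submodule.mem_top : f ∈ _)
  obtain ⟨c, rfl⟩ := Submodule.mem_span_singleton.1 hc
  obtain ⟨d, rfl⟩ := Submodule.mem_span_singleton.1 hd
  have hab : ⁅a, b⁆ = h := by
    have hhf : ⁅h, f⁆ = 0 := by rw [← lie_skew, hH.lie_f_h, neg_zero]
    rw [eq_sub_of_add_eq hae, eq_sub_of_add_eq hbf]
    simp [hH.lie_e_f, hH.lie_e_h, hhf]
  have hhS : h ∈ S := hab ▸ S.lie_mem ha hb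
  rw [← LieSubalgebra.toSubmodule_inj, LieSubalgebra.top_toSubmodule, ← hS]
  exact (sup_eq_left.2 ((Submodule.span_singleton_le_iff_mem _ _).2 hhS)).symm

theorem exists_toSubmodule_eq_of_mem (hspan : Submodule.span R {e, f, h} = ⊤)
    {p : Submodule R L} (hp : h ∈ p) : ∃ A : LieSubalgebra R L, ↑A = p :=
  p.exists_lieSubalgebra_coe_eq_iff.2 fun x y _ _ ↦
    (Submodule.span_singleton_le_iff_mem _ _).2 hp (hH.lie_mem_span_singleton hspan x y)

theorem sup_eq_top_iff (hspan : Submodule.span R {e, f, h} = ⊤) (A B : LieSubalgebra R L) :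
    A ⊔ B = ⊤ ↔ (A : Submodule R L) ⊔ B ⊔ R ∙ h = ⊤ := by
  constructor
  · intro hAB
    obtain ⟨C, hC⟩ := hH.exists_toSubmodule_eq_of_mem hspan
      (Submodule.mem_sup_right (Submodule.mem_span_singleton_self h) :
        h ∈ (A : Submodule R L) ⊔ B ⊔ R ∙ h)
    have hABC : A ⊔ B ≤ C := by
      refine sup_le ?_ ?_ <;> rw [← LieSubalgebra.toSubmodule_le_toSubmodule, hC]
      exacts [le_sup_left.trans le_sup_left, le_sup_right.trans le_sup_left]
    rw [← hC, top_unique (hAB.ge.trans hABC), LieSubalgebra.top_toSubmodule]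
  · intro hAB
    refine hH.eq_top_of_sup_span_singleton_eq_top _ (top_unique (hAB ▸ sup_le_sup_right ?_ _))
    exact sup_le ((LieSubalgebra.toSubmodule_le_toSubmodule _ _).2 le_sup_left)
      ((LieSubalgebra.toSubmodule_le_toSubmodule _ _).2 le_sup_right)

end CommRing

variable {K L : Type*} [Field K] [LieRing L] [LieAlgebra K L] {e f h : L}
  (hH : IsHeisenbergTriple e f h)
include hH

theorem finrank_le_one_or_mem (hdim : finrank K L = 3) (A : LieSubalgebra K L) :
    finrank K (A : Submodule K L) ≤ 1 ∨ h ∈ A := by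
  by_contra! ⟨hA, hhA⟩
  have : FiniteDimensional K L := Module.finite_of_finrank_pos (by omega)
  have hh : h ≠ 0 := fun h0 ↦ hhA (h0 ▸ A.zero_mem)
  have hdisj : (A : Submodule K L) ⊓ K ∙ h = ⊥ :=
    disjoint_iff.1 ((Submodule.disjoint_span_singleton' hh).2 hhA)
  have hsup := Submodule.finrank_sup_add_finrank_inf_eq (A : Submodule K L) (K ∙ h)
  rw [hdisj, finrank_bot, finrank_span_singleton hh] at hsup
  have htop : (A : Submodule K L) ⊔ K ∙ h = ⊤ :=
    Submodule.eq_top_of_finrank_eq (le_antisymm (Submodule.finrank_le _) (by omega))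
  exact hhA (hH.eq_top_of_sup_span_singleton_eq_top A htop ▸ LieSubalgebra.mem_top h)

theorem exists_toSubmodule_eq_of_mem_heisenbergVertexSpaces
    (hspan : Submodule.span K {e, f, h} = ⊤) {p : Submodule K L}
    (hp : p ∈ heisenbergVertexSpaces K h) : ∃ A : LieSubalgebra K L, ↑A = p :=
  hp.elim (fun hp ↦ LieSubalgebra.exists_toSubmodule_eq_of_finrank_eq_one hp.1)
    fun hp ↦ hH.exists_toSubmodule_eq_of_mem hspan hp.1

theorem toSubmodule_mem_heisenbergVertexSpaces_iff (hdim : finrank K L = 3) (hh : h ≠ 0)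
    (A : LieSubalgebra K L) :
    (A : Submodule K L) ∈ heisenbergVertexSpaces K h ↔
      (A ≠ ⊥ ∧ A ≠ ⊤) ∧ A ≠ LieSubalgebra.lieSpan K L {h} := by
  have : FiniteDimensional K L := Module.finite_of_finrank_pos (by omega)
  have hbot : A = ⊥ ↔ finrank K (A : Submodule K L) = 0 := by
    rw [Submodule.finrank_eq_zero, ← LieSubalgebra.bot_toSubmodule, LieSubalgebra.toSubmodule_inj]
  have htop : A = ⊤ ↔ finrank K (A : Submodule K L) = 3 := by
    rw [← LieSubalgebra.toSubmodule_inj, LieSubalgebra.top_toSubmodule]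
    refine ⟨fun hA ↦ by rw [hA, finrank_top, hdim], fun hA ↦ ?_⟩
    exact Submodule.eq_top_of_finrank_eq (hA.trans hdim.symm)
  have hZ' : A = LieSubalgebra.lieSpan K L {h} ↔ (A : Submodule K L) = K ∙ h := by
    rw [← LieSubalgebra.toSubmodule_inj, LieSubalgebra.toSubmodule_lieSpan_singleton]
  have hZ : (A : Submodule K L) = K ∙ h ↔ finrank K (A : Submodule K L) = 1 ∧ h ∈ A := by
    refine ⟨fun hA ↦ ?_, fun ⟨h1, hhA⟩ ↦ ?_⟩
    · rw [← LieSubalgebra.mem_toSubmodule, hA]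
      exact ⟨finrank_span_singleton hh, Submodule.mem_span_singleton_self h⟩
    · exact (Submodule.eq_of_le_of_finrank_eq ((Submodule.span_singleton_le_iff_mem _ _).2 hhA)
        ((finrank_span_singleton hh).trans h1.symm)).symm
  have hle : finrank K (A : Submodule K L) ≤ 3 := hdim ▸ Submodule.finrank_le _
  simp only [heisenbergVertexSpaces, Set.mem_union, Set.mem_ofPred_eq, ne_eq, hbot, htop, hZ', hZ,
    LieSubalgebra.mem_toSubmodule]
  by_cases hhA : h ∈ A
  · simp only [hhA, and_true, true_and]
    omega
  · have h1 := (hH.finrank_le_one_or_mem hdim A).resolve_right hhA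
    simp only [hhA, and_true, and_false, not_false_eq_true]
    omega

theorem natCard_vertices [Finite K] (hspan : Submodule.span K {e, f, h} = ⊤)
    (hdim : finrank K L = 3) (hh : h ≠ 0) :
    Nat.card {A : LieSubalgebra K L //
      (A ≠ ⊥ ∧ A ≠ ⊤) ∧ A ≠ LieSubalgebra.lieSpan K L {h}} = (Nat.card K + 1) ^ 2 := by
  rw [← ncard_heisenbergVertexSpaces hdim hh, ← LieSubalgebra.natCard_toSubmodule_mem
    fun p hp ↦ hH.exists_toSubmodule_eq_of_mem_heisenbergVertexSpaces hspan hp]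
  exact Nat.card_congr (Equiv.subtypeEquivRight fun A ↦
    (hH.toSubmodule_mem_heisenbergVertexSpaces_iff hdim hh A).symm)

theorem natCard_adjacent [Finite K] (hspan : Submodule.span K {e, f, h} = ⊤)
    (hdim : finrank K L = 3) (hh : h ≠ 0) {A : LieSubalgebra K L}
    (hA : (A ≠ ⊥ ∧ A ≠ ⊤) ∧ A ≠ LieSubalgebra.lieSpan K L {h}) :
    Nat.card {B : LieSubalgebra K L //
      ((B ≠ ⊥ ∧ B ≠ ⊤) ∧ B ≠ LieSubalgebra.lieSpan K L {h}) ∧ B ≠ A ∧ A ⊔ B = ⊤} =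
      Nat.card K ^ 2 + Nat.card K := by
  have : FiniteDimensional K L := Module.finite_of_finrank_pos (by omega)
  have : Finite L := Module.finite_of_finite K
  set P := (A : Submodule K L) ⊔ K ∙ h
  have hP : finrank K P = 2 := finrank_sup_span_singleton_of_mem_heisenbergVertexSpaces hh
    ((hH.toSubmodule_mem_heisenbergVertexSpaces_iff hdim hh A).2 hA)
  have hadj (B : LieSubalgebra K L) : (B ≠ A ∧ A ⊔ B = ⊤) ↔ ¬ (B : Submodule K L) ≤ P := by
    rw [hH.sup_eq_top_iff hspan, sup_right_comm,
      Submodule.sup_eq_top_iff_not_le (by rw [hP, hdim])]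
    exact and_iff_right_of_imp fun hBP hBA ↦ hBP (hBA ▸ le_sup_left)
  have hsplit := Set.ncard_inter_add_ncard_sdiff_eq_ncard (heisenbergVertexSpaces K h) (Set.Iic P)
  rw [ncard_heisenbergVertexSpaces hdim hh, ncard_heisenbergVertexSpaces_inter_Iic hh
    (Submodule.mem_sup_right (Submodule.mem_span_singleton_self h)) hP] at hsplit
  calc _ = (heisenbergVertexSpaces K h \ Set.Iic P).ncard := by
        rw [← LieSubalgebra.natCard_toSubmodule_mem
          fun p hp ↦ hH.exists_toSubmodule_eq_of_mem_heisenbergVertexSpaces hspan hp.1]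
        exact Nat.card_congr (Equiv.subtypeEquivRight fun B ↦ by
          rw [hadj, ← hH.toSubmodule_mem_heisenbergVertexSpaces_iff hdim hh]
          rfl)
    _ = Nat.card K ^ 2 + Nat.card K := by linarith

theorem forall_sup_ne_top_iff [Finite K] (hspan : Submodule.span K {e, f, h} = ⊤)
    (hdim : finrank K L = 3) (hh : h ≠ 0) {A : LieSubalgebra K L} (hA₀ : A ≠ ⊥) (hA : A ≠ ⊤) :
    (∀ B : LieSubalgebra K L, B ≠ ⊥ → B ≠ ⊤ → B ≠ A → A ⊔ B ≠ ⊤) ↔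
      A = LieSubalgebra.lieSpan K L {h} := by
  refine ⟨fun hiso ↦ by_contra fun hAZ ↦ ?_, ?_⟩
  · have hpos : 0 < Nat.card K ^ 2 + Nat.card K := Nat.add_pos_right _ Nat.card_pos
    rw [← hH.natCard_adjacent hspan hdim hh ⟨⟨hA₀, hA⟩, hAZ⟩] at hpos
    obtain ⟨⟨B, ⟨⟨hB₀, hB⟩, -⟩, hBA, hAB⟩⟩ := (Nat.card_pos_iff.1 hpos).1
    exact hiso B hB₀ hB hBA hAB
  · rintro rfl B - hB - hAB
    refine hB (hH.eq_top_of_sup_span_singleton_eq_top B ?_)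
    rwa [hH.sup_eq_top_iff hspan, LieSubalgebra.toSubmodule_lieSpan_singleton, sup_right_comm,
      sup_idem, sup_comm] at hAB

end IsHeisenbergTriple

/-- The comaximal graph of the Heisenberg algebra `H₃(F_q)` with its unique
isolated vertex (the center `Z = span(h)`) removed is `(q²+q)`-regular on
`(q+1)²` vertices. -/
theorem heisenberg_comaximal_star_regular
    (F : Type*) [Field F] [Fintype F] (q : ℕ) (hq : Fintype.card F = q)
    (H : Type*) [LieRing H] [LieAlgebra F H]
    (e f h : H) (hspan : Submodule.span F {e, f, h} = ⊤)
    (hdim : finrank F H = 3)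
    (hef : ⁅e, f⁆ = h) (heh : ⁅e, h⁆ = 0) (hfh : ⁅f, h⁆ = 0) :
    -- the center is the unique isolated vertex of Γ(H)
    (∀ A : LieSubalgebra F H, A ≠ ⊥ → A ≠ ⊤ →
        ((∀ B : LieSubalgebra F H, B ≠ ⊥ → B ≠ ⊤ → B ≠ A → A ⊔ B ≠ ⊤) ↔
          A = LieSubalgebra.lieSpan F H {h})) ∧
    -- removing it leaves (q+1)² vertices
    Nat.card {A : LieSubalgebra F H //
        (A ≠ ⊥ ∧ A ≠ ⊤) ∧ A ≠ LieSubalgebra.lieSpan F H {h}} = (q + 1) ^ 2 ∧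
    -- each remaining vertex has degree q² + q
    (∀ A : LieSubalgebra F H, A ≠ ⊥ → A ≠ ⊤ →
        A ≠ LieSubalgebra.lieSpan F H {h} →
        Nat.card {B : LieSubalgebra F H //
          ((B ≠ ⊥ ∧ B ≠ ⊤) ∧ B ≠ LieSubalgebra.lieSpan F H {h}) ∧
            B ≠ A ∧ A ⊔ B = ⊤} = q ^ 2 + q) := by
  have hH : IsHeisenbergTriple e f h := ⟨hef, heh, hfh⟩
  have hh : h ≠ 0 := by
    classical
    rintro rfl
    have hle := finrank_span_finset_le_card (R := F) ({e, f} : Finset H)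
    rw [Set.finrank, Finset.coe_pair, ← Submodule.span_insert_zero, Set.insert_comm,
      Set.pair_comm, hspan, finrank_top] at hle
    have := Finset.card_le_two (a := e) (b := f)
    omega
  have hcard : Nat.card F = q := Nat.card_eq_fintype_card.trans hq
  subst hcard
  exact ⟨fun A hA₀ hA ↦ hH.forall_sup_ne_top_iff hspan hdim hh hA₀ hA,
    hH.natCard_vertices hspan hdim hh,
    fun A hA₀ hA hAZ ↦ hH.natCard_adjacent hspan hdim hh ⟨⟨hA₀, hA⟩, hAZ⟩⟩
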